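/- arXiv:1801.04668 — 5 statements merged into one kernel-verified Lean document; each statement's English description precedes it below -/
import Mathlib

section
/- Let H be an r×n binary parity-check matrix in which every column has Hamming weight at least v, and suppose the maximum column intersection of H is s (i.e., any two distinct columns share a 1 in at most s common rows). Then one round of majority-logic decoding based on H (flip bit i iff strictly more than half of the parity checks involving i are unsatisfied, all flips computed in parallel) corrects every error pattern of weight at most ⌊v/(2s)⌋. -/
/-!
Since `H c = 0`, the syndrome is `H e`, and a check is unsatisfied iff it contains an odd number
of error positions. If position `i` is correct, every unsatisfied check on `i` contains some error
position, and each error shares at most `s` checks with `i`; so at most `s · wt(e) ≤ v/2` checks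
on `i` are unsatisfied and `i` is not flipped. If `i` is in error, every satisfied check on `i`
contains another error position, so at most `s · (wt(e) - 1) < v/2` checks on `i` are
satisfied and `i` is flipped.
-/

open Finset Matrix

namespace MajorityLogic

variable {m ι : Type*}

theorem mulVec_apply_eq_sum_support [Fintype ι] (H : Matrix m ι (ZMod 2)) (e : ι → ZMod 2)
    (j : m) : (H *ᵥ e) j = ∑ i ∈ univ.filter (fun i => e i ≠ 0), H j i := by
  have mul_eq_ite : ∀ a x : ZMod 2, a * x = if x ≠ 0 then a else 0 := by decide
  rw [sum_filter, mulVec, dotProduct]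
  exact sum_congr rfl fun i _ => mul_eq_ite (H j i) (e i)

theorem zmod_two_eq_one_of_ne_zero {x : ZMod 2} (hx : x ≠ 0) : x = 1 :=
  Fin.eq_one_of_ne_zero x hx

variable [Fintype m] [DecidableEq m]

def checksOn (H : Matrix m ι (ZMod 2)) (i : ι) : Finset m :=
  univ.filter fun j => H j i = 1

theorem mem_biUnion_checksOn_of_sum_ne_zero {H : Matrix m ι (ZMod 2)} {T : Finset ι} {j : m}
    (h : ∑ i ∈ T, H j i ≠ 0) : j ∈ T.biUnion (checksOn H) := by
  obtain ⟨i, hiT, hji⟩ := exists_ne_zero_of_sum_ne_zero h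
  exact mem_biUnion.2 ⟨i, hiT, mem_filter.2 ⟨mem_univ j, zmod_two_eq_one_of_ne_zero hji⟩⟩

theorem card_checksOn_inter_biUnion_le {H : Matrix m ι (ZMod 2)} {s : ℕ}
    (hint : ∀ i i' : ι, i ≠ i' → #(checksOn H i ∩ checksOn H i') ≤ s)
    {i : ι} {T : Finset ι} (hiT : i ∉ T) :
    #(checksOn H i ∩ T.biUnion (checksOn H)) ≤ #T * s := by
  rw [inter_biUnion]
  exact card_biUnion_le_card_mul _ _ _ fun i' hi' => hint i i' (ne_of_mem_of_not_mem hi' hiT).symm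

variable [Fintype ι] {H : Matrix m ι (ZMod 2)} {s : ℕ} {e : ι → ZMod 2} {i : ι}

theorem card_unsatisfied_checksOn_le_of_eq_zero
    (hint : ∀ i i' : ι, i ≠ i' → #(checksOn H i ∩ checksOn H i') ≤ s) (hi : e i = 0) :
    #((checksOn H i).filter fun j => (H *ᵥ e) j = 1) ≤
      #(univ.filter fun i => e i ≠ 0) * s := by
  refine (card_le_card fun j hj => ?_).trans
    (card_checksOn_inter_biUnion_le hint (T := univ.filter _) (by simpa using hi))
  obtain ⟨hji, hsyn⟩ := mem_filter.1 hj
  refine mem_inter.2 ⟨hji, mem_biUnion_checksOn_of_sum_ne_zero ?_⟩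
  rw [← mulVec_apply_eq_sum_support, hsyn]
  exact one_ne_zero

theorem card_satisfied_checksOn_le_of_ne_zero [DecidableEq ι]
    (hint : ∀ i i' : ι, i ≠ i' → #(checksOn H i ∩ checksOn H i') ≤ s) (hi : e i ≠ 0) :
    #((checksOn H i).filter fun j => ¬(H *ᵥ e) j = 1) ≤
      (#(univ.filter fun i => e i ≠ 0) - 1) * s := by
  set S := univ.filter fun i => e i ≠ 0
  have hiS : i ∈ S := mem_filter.2 ⟨mem_univ i, hi⟩
  rw [← card_erase_of_mem hiS]
  refine (card_le_card fun j hj => ?_).trans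
    (card_checksOn_inter_biUnion_le hint (notMem_erase i S))
  obtain ⟨hji, hsyn⟩ := mem_filter.1 hj
  refine mem_inter.2 ⟨hji, mem_biUnion_checksOn_of_sum_ne_zero fun h0 => hsyn ?_⟩
  rw [mulVec_apply_eq_sum_support, ← add_sum_erase S _ hiS, h0, add_zero]
  exact (mem_filter.1 hji).2

theorem two_mul_card_unsatisfied_checksOn_le_of_eq_zero
    (hint : ∀ i i' : ι, i ≠ i' → #(checksOn H i ∩ checksOn H i') ≤ s)
    (hwt : #(univ.filter fun i => e i ≠ 0) ≤ #(checksOn H i) / (2 * s)) (hi : e i = 0) :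
    2 * #((checksOn H i).filter fun j => (H *ᵥ e) j = 1) ≤ #(checksOn H i) := by
  have hunsat := card_unsatisfied_checksOn_le_of_eq_zero hint hi
  have hweight := (Nat.mul_le_mul_right (2 * s) hwt).trans (Nat.div_mul_le_self _ _)
  nlinarith

theorem card_checksOn_lt_two_mul_card_unsatisfied_of_ne_zero [DecidableEq ι]
    (hint : ∀ i i' : ι, i ≠ i' → #(checksOn H i ∩ checksOn H i') ≤ s)
    (hwt : #(univ.filter fun i => e i ≠ 0) ≤ #(checksOn H i) / (2 * s)) (hi : e i ≠ 0) :
    #(checksOn H i) < 2 * #((checksOn H i).filter fun j => (H *ᵥ e) j = 1) := by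
  have hsat := card_satisfied_checksOn_le_of_ne_zero hint hi
  have hsplit := card_filter_add_card_filter_not (s := checksOn H i) fun j => (H *ᵥ e) j = 1
  have hweight := (Nat.mul_le_mul_right (2 * s) hwt).trans (Nat.div_mul_le_self _ _)
  set k := #(univ.filter fun i => e i ≠ 0)
  have hk : 1 ≤ k := card_pos.2 ⟨i, by simpa using hi⟩
  have hs : 0 < s := Nat.pos_of_ne_zero fun h0 => by
    simp only [h0, mul_zero, Nat.div_zero] at hwt; omega
  have hsub : (k - 1) * s + s = k * s := by
    rw [Nat.sub_one_mul, Nat.sub_add_cancel (Nat.le_mul_of_pos_left s hk)]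
  rw [mul_left_comm] at hweight
  omega

end MajorityLogic

open MajorityLogic

theorem majority_logic_corrects_general
    (r n v s : ℕ)
    (H : Matrix (Fin r) (Fin n) (ZMod 2))
    (hcol : ∀ i : Fin n, v ≤ (Finset.univ.filter (fun j : Fin r => H j i = 1)).card)
    (hint : ∀ i i' : Fin n, i ≠ i' →
      (Finset.univ.filter (fun j : Fin r => H j i = 1 ∧ H j i' = 1)).card ≤ s)
    (c e : Fin n → ZMod 2)
    (hc : Matrix.mulVec H c = 0)
    (hwt : (Finset.univ.filter (fun i : Fin n => e i ≠ 0)).card ≤ v / (2 * s)) :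
    ∀ i : Fin n,
      (if (Finset.univ.filter (fun j : Fin r => H j i = 1)).card <
          2 * (Finset.univ.filter (fun j : Fin r =>
                H j i = 1 ∧ Matrix.mulVec H (c + e) j = 1)).card
       then (c + e) i + 1 else (c + e) i) = c i := by
  intro i
  have hint_inter : ∀ i i' : Fin n, i ≠ i' → #(checksOn H i ∩ checksOn H i') ≤ s :=
    fun i i' h => by rw [checksOn, checksOn, ← filter_and]; exact hint i i' h
  have hwt_col : #(univ.filter fun i => e i ≠ 0) ≤ #(checksOn H i) / (2 * s) :=
    hwt.trans (Nat.div_le_div_right (hcol i))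
  have hsyn : H *ᵥ (c + e) = H *ᵥ e := by rw [mulVec_add, hc, zero_add]
  rw [hsyn, ← filter_filter, Pi.add_apply]
  change ite (#(checksOn H i) < 2 * #((checksOn H i).filter _)) _ _ = _
  by_cases hi : e i = 0
  · rw [if_neg (two_mul_card_unsatisfied_checksOn_le_of_eq_zero hint_inter hwt_col hi).not_gt, hi,
      add_zero]
  · rw [if_pos (card_checksOn_lt_two_mul_card_unsatisfied_of_ne_zero hint_inter hwt_col hi),
      zmod_two_eq_one_of_ne_zero hi, add_assoc, CharTwo.add_self_eq_zero, add_zero]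

/-- Majority-logic decoding based on a parity-check matrix whose
columns all have weight at least `v` and whose maximum column intersection is `s`
corrects every error pattern of weight at most `⌊v/(2s)⌋`. -/
theorem majority_logic_corrects
    (r n v s : ℕ) (hs : 0 < s)
    (H : Matrix (Fin r) (Fin n) (ZMod 2))
    (hcol : ∀ i : Fin n, v ≤ (Finset.univ.filter (fun j : Fin r => H j i = 1)).card)
    (hint : ∀ i i' : Fin n, i ≠ i' →
      (Finset.univ.filter (fun j : Fin r => H j i = 1 ∧ H j i' = 1)).card ≤ s)
    (c e : Fin n → ZMod 2)
    (hc : Matrix.mulVec H c = 0)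
    (hwt : (Finset.univ.filter (fun i : Fin n => e i ≠ 0)).card ≤ v / (2 * s)) :
    ∀ i : Fin n,
      (if (Finset.univ.filter (fun j : Fin r => H j i = 1)).card <
          2 * (Finset.univ.filter (fun j : Fin r =>
                H j i = 1 ∧ Matrix.mulVec H (c + e) j = 1)).card
       then (c + e) i + 1 else (c + e) i) = c i :=
  majority_logic_corrects_general r n v s H hcol hint c e hc hwt
end

section
/- Let 0 < α < β be constants, and let H be drawn from the random MDPC distribution D_{r,n,v,w} with α√n ≤ v < w ≤ β√n. Then for any ε > 0, the probability that the maximum column intersection of H exceeds (2+ε)·(ln n)/(ln ln n) tends to 0 as n → ∞. -/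
/-!
A union bound over the ordered pairs of distinct columns. For a fixed pair `j ≠ j'` the pair
`(τ j, τ j')` is uniformly distributed on ordered pairs of distinct points, so in each of the `v`
independent copies the two columns share a row block with probability at most
`q = (w - 1) / (n - 1)`. Hence their intersection number reaches `m` with probability at most
`C(v, m) q ^ m ≤ (e v q / m) ^ m ≤ (2 e β² / m) ^ m`, because `v q ≤ w² / (n - 1) ≤ 2 β²`.
For `m ≥ (2 + ε) ln n / ln ln n` one has `m ln m ≥ (2 + ε / 2) ln n` eventually, since
`ln ln ln n = o(ln ln n)`; so the bound stays `o(1)` after multiplying by the `n²` pairs.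
-/

open Finset Filter Real Equiv
open scoped Classical

section Permutations

variable {α : Type*} [Fintype α] [DecidableEq α]

lemma card_perm_apply_pair_eq (j j' : α) {a b c d : α} (hab : a ≠ b) (hcd : c ≠ d) :
    #{τ : Perm α | τ j = a ∧ τ j' = b} = #{τ : Perm α | τ j = c ∧ τ j' = d} := by
  have hinj {x y : α} (hxy : x ≠ y) : Function.Injective ![x, y] := by
    intro i k h; fin_cases i <;> fin_cases k <;> simp_all [eq_comm]
  obtain ⟨ρ, hρ⟩ := Perm.exists_extending_pair _ _ (hinj hab) (hinj hcd)
  refine card_equiv (Equiv.mulLeft ρ) fun τ => ?_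
  simp only [mem_filter, mem_univ, true_and, coe_mulLeft, Perm.mul_apply]
  have hρa : ρ a = c := hρ 0
  have hρb : ρ b = d := hρ 1
  rw [← hρa, ← hρb, ρ.injective.eq_iff, ρ.injective.eq_iff]

lemma card_perm_pair_mem {j j' : α} (hj : j ≠ j') {S : Finset (α × α)}
    (hS : S ⊆ univ.offDiag) :
    #{τ : Perm α | (τ j, τ j') ∈ S} = #S * #{τ : Perm α | τ j = j ∧ τ j' = j'} := by
  refine (card_eq_sum_card_fiberwise (f := fun τ : Perm α => (τ j, τ j')) (t := S)
    fun τ hτ => (mem_filter.1 hτ).2).trans (sum_const_nat fun p hp => ?_)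
  rw [filter_filter, ← card_perm_apply_pair_eq j j' (mem_offDiag.1 (hS hp)).2.2 hj]
  congr 1
  ext τ
  simp only [mem_filter, mem_univ, true_and, Prod.ext_iff]
  constructor
  · exact fun h => h.2
  · rintro ⟨h1, h2⟩; exact ⟨by rw [h1, h2]; exact hp, h1, h2⟩

end Permutations

lemma card_offDiag_filter_div_eq_le {n w : ℕ} (hw : 0 < w) :
    #{p ∈ (univ : Finset (Fin n)).offDiag | (p.1 : ℕ) / w = p.2 / w} ≤ n * (w - 1) := by
  calc _ ≤ (w - 1) * #(univ : Finset (Fin n)) :=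
        card_le_mul_card_image_of_maps_to (f := Prod.fst) (fun _ _ => mem_univ _) _ fun a _ => ?_
    _ = n * (w - 1) := by rw [card_univ, Fintype.card_fin, mul_comm]
  -- a partner `b` of `a` is determined by `b % w`, which cannot be `a % w`
  calc _ ≤ #((range w).erase ((a : ℕ) % w)) := by
        refine card_le_card_of_injOn (fun p => (p.2 : ℕ) % w) (fun p hp => ?_)
          fun p hp q hq hpq => ?_
        · simp only [mem_coe, mem_filter, mem_offDiag, mem_univ, true_and] at hp
          obtain ⟨⟨hne, hdiv⟩, rfl⟩ := hp
          rw [mem_coe, mem_erase, mem_range]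
          exact ⟨fun hmod => hne (Fin.ext (Nat.ext_div_mod hdiv hmod.symm)), Nat.mod_lt _ hw⟩
        · simp only [mem_coe, mem_filter, mem_offDiag, mem_univ, true_and] at hp hq
          exact Prod.ext (hp.2.trans hq.2.symm)
            (Fin.ext (Nat.ext_div_mod (hp.1.2.symm.trans (hp.2 ▸ hq.2 ▸ hq.1.2)) hpq))
    _ = w - 1 := by rw [card_erase_of_mem (mem_range.2 (Nat.mod_lt _ hw)), card_range]

lemma card_perm_div_eq_le {n w : ℕ} (hw : 0 < w) {j j' : Fin n} (hj : j ≠ j') :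
    (#{τ : Perm (Fin n) | (τ j : ℕ) / w = (τ j' : ℕ) / w} : ℝ)
      ≤ (w - 1) / (n - 1) * Fintype.card (Perm (Fin n)) := by
  set S := {p ∈ (univ : Finset (Fin n)).offDiag | (p.1 : ℕ) / w = p.2 / w}
  set k := #{τ : Perm (Fin n) | τ j = j ∧ τ j' = j'}
  have hsame : #{τ : Perm (Fin n) | (τ j : ℕ) / w = (τ j' : ℕ) / w} = #S * k := by
    rw [← card_perm_pair_mem hj (filter_subset _ _)]
    congr 1
    ext τ
    simp [hj]
  have hall : Fintype.card (Perm (Fin n)) = n * (n - 1) * k := by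
    have h := card_perm_pair_mem hj (subset_refl (univ : Finset (Fin n)).offDiag)
    rw [filter_true_of_mem fun τ _ => mem_offDiag.2
      ⟨mem_univ (τ j), mem_univ (τ j'), τ.injective.ne hj⟩, card_univ] at h
    rw [h, offDiag_card, card_univ, Fintype.card_fin, Nat.mul_sub_one]
  have hn : (2 : ℝ) ≤ n := by
    have := Fintype.one_lt_card_iff.2 ⟨j, j', hj⟩
    exact_mod_cast (Fintype.card_fin n) ▸ this
  have hS : (#S : ℝ) ≤ n * (w - 1) := by
    have := card_offDiag_filter_div_eq_le (n := n) hw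
    rw [← Nat.cast_pred hw]
    exact_mod_cast this
  rw [hsame, hall]
  push_cast [Nat.cast_sub (by omega : 1 ≤ n)]
  rw [div_mul_eq_mul_div, le_div_iff₀ (by linarith)]
  nlinarith [mul_le_mul_of_nonneg_right hS
    (mul_nonneg (Nat.cast_nonneg k) (by linarith : (0 : ℝ) ≤ n - 1))]

lemma card_filter_le_count_coords {Ω : Type*} [Fintype Ω] (P : Ω → Prop) [DecidablePred P]
    (v m : ℕ) :
    #{σ : Fin v → Ω | m ≤ #{ℓ | P (σ ℓ)}}
      ≤ v.choose m * #{x | P x} ^ m * Fintype.card Ω ^ (v - m) := by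
  calc _ ≤ #((powersetCard m (univ : Finset (Fin v))).biUnion fun S =>
          Fintype.piFinset fun ℓ => if ℓ ∈ S then ({x | P x} : Finset Ω) else univ) := by
        refine card_le_card fun σ hσ => ?_
        obtain ⟨S, hSsub, hScard⟩ := exists_subset_card_eq (mem_filter.1 hσ).2
        refine mem_biUnion.2 ⟨S, mem_powersetCard.2 ⟨subset_univ S, hScard⟩,
          Fintype.mem_piFinset.2 fun ℓ => ?_⟩
        split_ifs with hℓ
        · simpa using hSsub hℓ
        · exact mem_univ _
    _ ≤ ∑ S ∈ powersetCard m (univ : Finset (Fin v)),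
          #(Fintype.piFinset fun ℓ => if ℓ ∈ S then ({x | P x} : Finset Ω) else univ) :=
        card_biUnion_le
    _ = v.choose m * (#{x | P x} ^ m * Fintype.card Ω ^ (v - m)) := by
        rw [sum_const_nat fun S hS => ?_, card_powersetCard, card_univ, Fintype.card_fin]
        rw [mem_powersetCard] at hS
        simp only [Fintype.card_piFinset, apply_ite card, card_univ]
        rw [prod_ite, prod_const, prod_const, filter_mem_eq_inter, univ_inter, hS.2, filter_not,
          filter_mem_eq_inter, univ_inter, card_sdiff_of_subset hS.1, hS.2, card_univ,
          Fintype.card_fin]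
    _ = _ := (mul_assoc _ _ _).symm

lemma card_filter_le_count_coords_of_le {Ω : Type*} [Fintype Ω] (P : Ω → Prop)
    [DecidablePred P] (v m : ℕ) {p : ℝ} (hP : (#{x | P x} : ℝ) ≤ p * Fintype.card Ω) :
    (#{σ : Fin v → Ω | m ≤ #{ℓ | P (σ ℓ)}} : ℝ)
      ≤ v.choose m * p ^ m * Fintype.card (Fin v → Ω) := by
  rcases le_or_gt m v with hmv | hvm
  · calc _ ≤ (v.choose m * #{x | P x} ^ m * Fintype.card Ω ^ (v - m) : ℝ) := by
          exact_mod_cast card_filter_le_count_coords P v m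
      _ ≤ v.choose m * (p * Fintype.card Ω) ^ m * Fintype.card Ω ^ (v - m) := by gcongr
      _ = _ := by
          rw [Fintype.card_fun, Fintype.card_fin, Nat.cast_pow, ← Nat.add_sub_cancel' hmv,
            pow_add, Nat.add_sub_cancel_left]
          ring
  · have hempty : #{σ : Fin v → Ω | m ≤ #{ℓ | P (σ ℓ)}} = 0 := by
      refine card_eq_zero.2 (filter_false_of_mem fun σ _ => ?_)
      have := card_le_univ (α := Fin v) {ℓ | P (σ ℓ)}
      rw [Fintype.card_fin] at this
      omega
    simp [hempty, Nat.choose_eq_zero_of_lt hvm]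

/-- The intersection number of columns `j` and `j'` of the vertical stack of the column-permuted
copies of `P_{n,w}`: in the `ℓ`-th copy, column `j` has its single one in row `σ ℓ j / w`. -/
def columnIntersection {n v : ℕ} (w : ℕ) (σ : Fin v → Perm (Fin n)) (j j' : Fin n) : ℕ :=
  #{ℓ | (σ ℓ j : ℕ) / w = (σ ℓ j' : ℕ) / w}

def intersectionAtLeast (n v w m : ℕ) : Finset (Fin v → Perm (Fin n)) :=
  {σ | ∃ j j', j ≠ j' ∧ m ≤ columnIntersection w σ j j'}

lemma card_intersectionAtLeast_le {n v w : ℕ} (hn : 0 < n) (hw : 0 < w) (m : ℕ) :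
    (#(intersectionAtLeast n v w m) : ℝ) ≤
      n ^ 2 * v.choose m * ((w - 1) / (n - 1)) ^ m * Fintype.card (Fin v → Perm (Fin n)) := by
  have hunion : intersectionAtLeast n v w m ⊆ (univ : Finset (Fin n)).offDiag.biUnion fun p =>
          {σ | m ≤ columnIntersection w σ p.1 p.2} := by
    intro σ hσ
    obtain ⟨j, j', hj, hm⟩ := (mem_filter.1 hσ).2
    exact mem_biUnion.2 ⟨(j, j'), mem_offDiag.2 ⟨mem_univ j, mem_univ j', hj⟩, mem_filter.2
      ⟨mem_univ σ, hm⟩⟩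
  have hq : (0 : ℝ) ≤ (w - 1) / (n - 1) := by
    have : (1 : ℝ) ≤ w := by exact_mod_cast hw
    have : (1 : ℝ) ≤ n := by exact_mod_cast hn
    positivity
  calc _ ≤ ∑ p ∈ (univ : Finset (Fin n)).offDiag,
          (#{σ : Fin v → Perm (Fin n) | m ≤ columnIntersection w σ p.1 p.2} : ℝ) := by
        exact_mod_cast (card_le_card hunion).trans card_biUnion_le
    _ ≤ ∑ _p ∈ (univ : Finset (Fin n)).offDiag, v.choose m * ((w - 1) / (n - 1)) ^ m
          * (Fintype.card (Fin v → Perm (Fin n)) : ℝ) :=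
        sum_le_sum fun p hp => card_filter_le_count_coords_of_le
          (fun τ : Perm (Fin n) => (τ p.1 : ℕ) / w = (τ p.2 : ℕ) / w) v m
          (card_perm_div_eq_le hw (mem_offDiag.1 hp).2.2)
    _ ≤ _ := by
        rw [sum_const, nsmul_eq_mul, offDiag_card, card_univ, Fintype.card_fin, ← mul_assoc,
          ← mul_assoc]
        gcongr
        exact_mod_cast (Nat.sub_le _ _).trans (sq n).ge

lemma Nat.cast_choose_le_exp_mul_div_pow (v m : ℕ) :
    (v.choose m : ℝ) ≤ (exp 1 * v / m) ^ m := by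
  rcases m.eq_zero_or_pos with rfl | hm
  · simp
  have hfact : (m : ℝ) ^ m ≤ exp 1 ^ m * m.factorial := by
    rw [← div_le_iff₀ (by positivity), ← exp_nat_mul, mul_one]
    exact pow_div_factorial_le_exp _ (Nat.cast_nonneg m) m
  calc (v.choose m : ℝ) ≤ v ^ m / m.factorial := Nat.choose_le_pow_div m v
    _ ≤ _ := by
      rw [div_pow, mul_pow, div_le_div_iff₀ (by positivity) (by positivity)]
      nlinarith [pow_nonneg (Nat.cast_nonneg (α := ℝ) v) m]

lemma natCast_mul_div_le_two_mul_sq {n v w : ℕ} {β : ℝ} (hn : 2 ≤ n) (hvw : v < w)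
    (hwβ : (w : ℝ) ≤ β * √n) : (v : ℝ) * ((w - 1) / (n - 1)) ≤ 2 * β ^ 2 := by
  have hv : (v : ℝ) + 1 ≤ w := by exact_mod_cast hvw
  have hn' : (2 : ℝ) ≤ n := by exact_mod_cast hn
  have hw2 : (w : ℝ) ^ 2 ≤ β ^ 2 * n := by
    calc (w : ℝ) ^ 2 ≤ (β * √n) ^ 2 := by gcongr
      _ = β ^ 2 * n := by rw [mul_pow, sq_sqrt (Nat.cast_nonneg n)]
  rw [← mul_div_assoc, div_le_iff₀ (by linarith)]
  have hv0 : (0 : ℝ) ≤ v := Nat.cast_nonneg v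
  nlinarith [sq_nonneg β]

lemma cast_choose_mul_pow_le {n v w : ℕ} (m : ℕ) {β : ℝ} (hn : 2 ≤ n) (hvw : v < w)
    (hwβ : (w : ℝ) ≤ β * √n) :
    (v.choose m : ℝ) * ((w - 1) / (n - 1)) ^ m ≤ (2 * exp 1 * β ^ 2 / m) ^ m := by
  have hq : (0 : ℝ) ≤ (w - 1) / (n - 1) := by
    have hw : (1 : ℝ) ≤ w := by exact_mod_cast (by omega : 1 ≤ w)
    have hn : (2 : ℝ) ≤ n := by exact_mod_cast hn
    exact div_nonneg (by linarith) (by linarith)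
  calc _ ≤ (exp 1 * v / m) ^ m * ((w - 1) / (n - 1)) ^ m := by
        gcongr
        exact Nat.cast_choose_le_exp_mul_div_pow v m
    _ = (exp 1 / m * (v * ((w - 1) / (n - 1)))) ^ m := by rw [← mul_pow]; ring_nf
    _ ≤ (exp 1 / m * (2 * β ^ 2)) ^ m := by
        gcongr (exp 1 / m * ?_) ^ m
        exact natCast_mul_div_le_two_mul_sq hn hvw hwβ
    _ = _ := by ring_nf

lemma eventually_le_mul_log_sub (C : ℝ) {ε : ℝ} (hε : 0 < ε) :
    ∀ᶠ L : ℝ in atTop,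
      (2 + ε / 2) * L ≤ (2 + ε) * L / log L * (log ((2 + ε) * L / log L) - C) := by
  set η := ε / (2 * (2 + ε))
  have hloglog : ∀ᶠ L : ℝ in atTop, log (log L) + (C - log (2 + ε)) ≤ η * log L := by
    have h := (isLittleO_log_id_atTop.add
      (Asymptotics.isLittleO_const_id_atTop (C - log (2 + ε))) |>.comp_tendsto
        tendsto_log_atTop).bound (by positivity : 0 < η)
    filter_upwards [h, tendsto_log_atTop.eventually_ge_atTop 0] with L hL hL0
    simp only [Function.comp_apply, id, norm_eq_abs, abs_of_nonneg hL0] at hL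
    exact (le_abs_self _).trans hL
  filter_upwards [hloglog, eventually_gt_atTop 1] with L hL hL1
  have hlogL : 0 < log L := log_pos hL1
  have hlog_g : log ((2 + ε) * L / log L) = log (2 + ε) + log L - log (log L) := by
    rw [log_div (by positivity) hlogL.ne', log_mul (by positivity) (by positivity)]
  calc (2 + ε / 2) * L = (2 + ε) * L / log L * ((1 - η) * log L) := by
        simp only [η]
        field_simp
        ring
    _ ≤ _ := by
        gcongr
        rw [hlog_g]
        linarith

lemma eventually_sq_mul_div_pow_lt {B ε δ : ℝ} (hB : 0 < B) (hε : 0 < ε) (hδ : 0 < δ) :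
    ∀ᶠ n : ℕ in atTop, ∀ m : ℕ,
      (2 + ε) * log n / log (log n) ≤ m → (n : ℝ) ^ 2 * (B / m) ^ m < δ := by
  have hlog : Tendsto (fun n : ℕ => log n) atTop atTop :=
    tendsto_log_atTop.comp tendsto_natCast_atTop_atTop
  filter_upwards [hlog.eventually (eventually_le_mul_log_sub (log B) hε),
    hlog.eventually_gt_atTop 1, (hlog.const_mul_atTop (half_pos hε)).eventually_gt_atTop (-log δ)]
    with n hg hL1 hLδ m hm
  set L := log (n : ℝ)
  set g := (2 + ε) * L / log L
  have hL0 : 0 < L := one_pos.trans hL1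
  have hn : (0 : ℝ) < n := Nat.cast_pos.2 (Nat.pos_of_ne_zero fun h => by simp [L, h] at hL0)
  have hg0 : 0 < g := by have := log_pos hL1; positivity
  have hm0 : (0 : ℝ) < m := hg0.trans_le hm
  have hgB : 0 ≤ log g - log B :=
    (pos_of_mul_pos_right ((by positivity : 0 < (2 + ε / 2) * L).trans_le hg) hg0.le).le
  have hmB : (2 + ε / 2) * L ≤ m * (log m - log B) :=
    hg.trans (mul_le_mul hm (by gcongr) hgB hm0.le)
  rw [← log_lt_log_iff (by positivity) hδ, log_mul (by positivity) (by positivity), log_pow,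
    log_pow, log_div hB.ne' hm0.ne', Nat.cast_ofNat]
  linarith

/-- For `H` drawn from the distribution `D_{r,n,v,w}` (stack of `v`
independently and uniformly column-permuted copies of `I_{n'} ⊗ 1_w`, `n = n'·w`)
with `α√n ≤ v < w ≤ β√n`, the probability that the maximum column intersection of
`H` exceeds `(2+ε)·ln n / ln ln n` tends to `0` as `n → ∞`. -/
theorem mdpc_max_intersection_small
    (α β : ℝ) (hα : 0 < α) (hαβ : α < β) (ε : ℝ) (hε : 0 < ε) :
    ∀ δ : ℝ, 0 < δ → ∃ N : ℕ, ∀ n n' w v : ℕ, N ≤ n → n = n' * w →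
      α * Real.sqrt n ≤ (v : ℝ) → v < w → (w : ℝ) ≤ β * Real.sqrt n →
      ((Finset.univ.filter (fun σ : Fin v → Equiv.Perm (Fin n) =>
          ∃ j j' : Fin n, j ≠ j' ∧
            (2 + ε) * Real.log n / Real.log (Real.log n) <
              ((Finset.univ.filter (fun ℓ : Fin v =>
                ((σ ℓ j : ℕ)) / w = ((σ ℓ j' : ℕ)) / w)).card : ℝ))).card : ℝ)
        / (Fintype.card (Fin v → Equiv.Perm (Fin n))) < δ := by
  intro δ hδ
  have hβ : 0 < β := hα.trans hαβ
  obtain ⟨N, hN⟩ := eventually_atTop.1 <|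
    (eventually_sq_mul_div_pow_lt (B := 2 * exp 1 * β ^ 2) (by positivity) hε hδ).and
      (eventually_ge_atTop 2)
  refine ⟨N, fun n _ w v hNn _ _ hvw hwβ => ?_⟩
  obtain ⟨hsmall, hn⟩ := hN n hNn
  set t := (2 + ε) * log n / log (log n)
  set m := ⌈t⌉₊
  have hsub : ({σ | ∃ j j', j ≠ j' ∧ t < (columnIntersection w σ j j' : ℝ)} : Finset _)
      ⊆ intersectionAtLeast n v w m := by
    intro σ
    simp only [intersectionAtLeast, mem_filter, mem_univ, true_and]
    exact fun ⟨j, j', hj, ht⟩ => ⟨j, j', hj, Nat.ceil_le.2 ht.le⟩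
  have hcard : (0 : ℝ) < Fintype.card (Fin v → Perm (Fin n)) := Nat.cast_pos.2 Fintype.card_pos
  rw [div_lt_iff₀ hcard]
  calc _ ≤ (#(intersectionAtLeast n v w m) : ℝ) := by exact_mod_cast card_le_card hsub
    _ ≤ n ^ 2 * v.choose m * ((w - 1) / (n - 1)) ^ m * Fintype.card (Fin v → Perm (Fin n)) :=
        card_intersectionAtLeast_le (by omega) (by omega) m
    _ ≤ n ^ 2 * (2 * exp 1 * β ^ 2 / m) ^ m * Fintype.card (Fin v → Perm (Fin n)) := by
        rw [mul_assoc (_ ^ 2 : ℝ)]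
        gcongr
        exact cast_choose_mul_pow_le m hn hvw hwβ
    _ < δ * Fintype.card (Fin v → Perm (Fin n)) := by
        gcongr
        exact hsmall m (Nat.le_ceil t)
end

section
/- Let h ∈ F_2^n be a fixed word of Hamming weight w and let e be chosen uniformly at random among the words of F_2^n of Hamming weight t. Then P(⟨h,e⟩ = 1) = (1/2)·(1 - (-2)^w · P_w^n(t) / C(n,w)), where P_w^n is the binary Krawtchouk polynomial of degree w and order n. Equivalently, (-2)^w P_w^n(t)/C(n,w) = 1 - 2·P(⟨h,e⟩=1). -/
/-!
Identify a word `e` of weight `t` with its support `S`, so that `⟨h, e⟩` is the parity of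
`|S ∩ H|`, `H` the support of `h`. Sorting the `t`-sets `S` by `j = |S ∩ H|` shows that
`∑_S (-1)^|S ∩ H| = ∑_j (-1)^j C(w,j) C(n-w,t-j) = K_t(w)`, hence
`1 - 2 P(⟨h,e⟩ = 1) = K_t(w) / C(n,t)`. Summing `(-1)^|S ∩ H|` over all pairs of a `w`-set `H`
and a `t`-set `S` in both orders gives the reciprocity `C(n,w) K_t(w) = C(n,t) K_w(t)`,
and `K_w(t) = (-2)^w P_w^n(t)`.
-/

open Finset

/-- The unnormalised binary Krawtchouk polynomial `K_k(x)` at an integer point; in the paper's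
normalisation `K_k(x) = (-2)^k P_k^n(x)`. -/
def krawtchouk (n k x : ℕ) : ℤ :=
  ∑ j ∈ range (k + 1), (-1) ^ j * (x.choose j : ℤ) * ((n - x).choose (k - j) : ℤ)

section Subsets

variable {α : Type*} [Fintype α] [DecidableEq α]

lemma card_powersetCard_univ_filter_card_inter (H : Finset α) {t j : ℕ} (hj : j ≤ t) :
    #{S ∈ powersetCard t univ | #(S ∩ H) = j} = (#H).choose j * (#Hᶜ).choose (t - j) := by
  have union_inter_sdiff {A B : Finset α} (hA : A ⊆ H) (hB : B ⊆ Hᶜ) :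
      (A ∪ B) ∩ H = A ∧ (A ∪ B) \ H = B := by
    have hBH : Disjoint B H := disjoint_of_subset_left hB disjoint_compl_left
    rw [union_inter_distrib_right, inter_eq_left.2 hA, disjoint_iff_inter_eq_empty.1 hBH,
      union_empty, union_sdiff_distrib, sdiff_eq_empty_iff_subset.2 hA, hBH.sdiff_eq_left,
      empty_union]
    exact ⟨rfl, rfl⟩
  rw [← card_powersetCard j H, ← card_powersetCard (t - j) Hᶜ, ← card_product]
  refine card_nbij' (fun S => (S ∩ H, S \ H)) (fun p => p.1 ∪ p.2) ?_ ?_ ?_ ?_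
  · intro S hS
    simp only [coe_filter, mem_powersetCard_univ, Set.mem_ofPred_eq] at hS
    have hcard := card_inter_add_card_sdiff S H
    simp only [coe_product, Set.mem_prod, mem_coe, mem_powersetCard]
    exact ⟨⟨inter_subset_right, hS.2⟩, fun x hx => by simp [(mem_sdiff.1 hx).2], by omega⟩
  · rintro ⟨A, B⟩ hAB
    simp only [coe_product, Set.mem_prod, mem_coe, mem_powersetCard] at hAB
    obtain ⟨⟨hA, hAc⟩, hB, hBc⟩ := hAB
    have hdisj : Disjoint A B :=
      disjoint_of_subset_left hA (disjoint_of_subset_right hB disjoint_compl_right)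
    simp only [coe_filter, mem_powersetCard_univ, Set.mem_ofPred_eq, card_union_of_disjoint hdisj,
      (union_inter_sdiff hA hB).1]
    omega
  · intro S _
    exact (union_comm _ _).trans (sdiff_union_inter S H)
  · rintro ⟨A, B⟩ hAB
    simp only [coe_product, Set.mem_prod, mem_coe, mem_powersetCard] at hAB
    obtain ⟨hinter, hsdiff⟩ := union_inter_sdiff hAB.1.1 hAB.2.1
    simp only [hinter, hsdiff]

lemma sum_powersetCard_univ_card_inter {M : Type*} [AddCommMonoid M] (H : Finset α) (t : ℕ)
    (f : ℕ → M) :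
    ∑ S ∈ powersetCard t univ, f #(S ∩ H)
      = ∑ j ∈ range (t + 1), ((#H).choose j * (#Hᶜ).choose (t - j)) • f j := by
  have maps_to : ∀ S ∈ powersetCard t univ, #(S ∩ H) ∈ range (t + 1) := fun S hS =>
    mem_range_succ_iff.2 <| (card_le_card inter_subset_left).trans (mem_powersetCard.1 hS).2.le
  rw [← sum_fiberwise_of_maps_to' maps_to]
  refine sum_congr rfl fun j hj => ?_
  rw [sum_const, card_powersetCard_univ_filter_card_inter H (mem_range_succ_iff.1 hj)]

lemma sum_neg_one_pow_card_inter (H : Finset α) (t : ℕ) :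
    ∑ S ∈ powersetCard t univ, (-1 : ℤ) ^ #(S ∩ H) = krawtchouk (Fintype.card α) t #H := by
  rw [sum_powersetCard_univ_card_inter, krawtchouk, card_compl]
  refine sum_congr rfl fun j _ => ?_
  rw [nsmul_eq_mul]
  push_cast
  ring

end Subsets

lemma sum_neg_one_pow_eq_card_sub_two_mul_card_filter_odd {β : Type*} (s : Finset β)
    (g : β → ℕ) : ∑ x ∈ s, (-1 : ℤ) ^ g x = #s - 2 * #{x ∈ s | Odd (g x)} := by
  have neg_one_pow_eq (k : ℕ) : (-1 : ℤ) ^ k = 1 - 2 * if Odd k then 1 else 0 := by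
    rcases k.even_or_odd with hk | hk
    · simp [hk.neg_one_pow, Nat.not_odd_iff_even.2 hk]
    · simp [hk.neg_one_pow, hk]
  simp only [neg_one_pow_eq, sum_sub_distrib, ← mul_sum, sum_boole, sum_const, nsmul_eq_mul,
    mul_one]

theorem choose_mul_krawtchouk_comm (n k l : ℕ) :
    n.choose k * krawtchouk n l k = n.choose l * krawtchouk n k l := by
  have double_sum (k l : ℕ) :
      ∑ H ∈ powersetCard k (univ : Finset (Fin n)), ∑ S ∈ powersetCard l univ,
        (-1 : ℤ) ^ #(S ∩ H) = n.choose k * krawtchouk n l k := by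
    rw [sum_congr rfl fun H hH => by
      rw [sum_neg_one_pow_card_inter, Fintype.card_fin, (mem_powersetCard_univ.1 hH)]]
    simp
  rw [← double_sum, ← double_sum, sum_comm]
  simp_rw [inter_comm]

section Words

variable {ι : Type*} [Fintype ι] [DecidableEq ι]

lemma sum_mul_eq_card_inter (h e : ι → ZMod 2) :
    ∑ i, h i * e i = (#(univ.filter (e · = 1) ∩ univ.filter (h · = 1)) : ZMod 2) := by
  have mul_eq_ite (x y : ZMod 2) : x * y = if y = 1 ∧ x = 1 then 1 else 0 := by
    fin_cases x <;> fin_cases y <;> decide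
  simp only [mul_eq_ite, sum_boole, filter_and]

lemma card_filter_weight_and_sum_mul_eq_one (h : ι → ZMod 2) (t : ℕ) :
    #{e : ι → ZMod 2 | #{i | e i = 1} = t ∧ ∑ i, h i * e i = 1}
      = #{S ∈ powersetCard t univ | Odd #(S ∩ univ.filter (h · = 1))} := by
  refine card_nbij' (fun e => univ.filter (e · = 1)) (fun S i => if i ∈ S then 1 else 0)
    ?_ ?_ ?_ ?_
  · intro e he
    simp_all [sum_mul_eq_card_inter, ZMod.natCast_eq_one_iff_odd]
  · intro S hS
    have hsupp : univ.filter (fun i => (if i ∈ S then 1 else 0 : ZMod 2) = 1) = S := by ext; simp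
    simp_all [sum_mul_eq_card_inter, ZMod.natCast_eq_one_iff_odd]
  · intro e _
    funext i
    obtain hi | hi : e i = 0 ∨ e i = 1 := by generalize e i = x; revert x; decide
    all_goals simp [hi]
  · intro S _
    ext
    simp

lemma krawtchouk_eq_choose_sub_two_mul_card_inner_eq_one (h : ι → ZMod 2) (t : ℕ) :
    krawtchouk (Fintype.card ι) t #{i | h i = 1}
      = (Fintype.card ι).choose t
          - 2 * #{e : ι → ZMod 2 | #{i | e i = 1} = t ∧ ∑ i, h i * e i = 1} := by
  rw [card_filter_weight_and_sum_mul_eq_one, ← sum_neg_one_pow_card_inter,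
    sum_neg_one_pow_eq_card_sub_two_mul_card_filter_odd, card_powersetCard, card_univ]

end Words

/-- For a fixed `h ∈ F_2^n` of Hamming weight `w` and a uniformly
random error `e` of Hamming weight `t`, the probability that `⟨h,e⟩ = 1` equals
`(1/2)·(1 - (-2)^w · P_w^n(t) / C(n,w))`, where `P_w^n` is the binary Krawtchouk
polynomial `P_w^n(X) = ((-1)^w/2^w) ∑_j (-1)^j C(X,j) C(n-X, w-j)` evaluated at the
integer `t`. -/
theorem prob_parity_check_krawtchouk
    (n w t : ℕ) (ht : t ≤ n) (h : Fin n → ZMod 2)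
    (hw : (Finset.univ.filter (fun i : Fin n => h i = 1)).card = w) :
    ((Finset.univ.filter (fun e : Fin n → ZMod 2 =>
        (Finset.univ.filter (fun i : Fin n => e i = 1)).card = t ∧
          (∑ i : Fin n, h i * e i) = 1)).card : ℝ) / (n.choose t : ℝ)
    = (1/2) * (1 - (-2 : ℝ) ^ w *
        (((-1 : ℝ) ^ w / 2 ^ w) * ∑ j ∈ Finset.range (w + 1),
          (-1 : ℝ) ^ j * (t.choose j : ℝ) * ((n - t).choose (w - j) : ℝ))
        / (n.choose w : ℝ)) := by
  have hwn : w ≤ n := hw ▸ (card_le_univ _).trans_eq (Fintype.card_fin n)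
  have hcount := congrArg (Int.cast (R := ℝ))
    (krawtchouk_eq_choose_sub_two_mul_card_inner_eq_one h t)
  have hrec : (n.choose w : ℝ) * krawtchouk n t w = n.choose t * krawtchouk n w t := by
    exact_mod_cast choose_mul_krawtchouk_comm n w t
  have hnorm : (-2 : ℝ) ^ w * ((-1) ^ w / 2 ^ w) = 1 := by
    rw [mul_div_assoc', ← mul_pow]; norm_num
  have hkraw : ∑ j ∈ range (w + 1), (-1 : ℝ) ^ j * t.choose j * (n - t).choose (w - j)
      = krawtchouk n w t := by
    simp [krawtchouk]
  have hct : (n.choose t : ℝ) ≠ 0 := by exact_mod_cast (Nat.choose_pos ht).ne'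
  have hcw : (n.choose w : ℝ) ≠ 0 := by exact_mod_cast (Nat.choose_pos hwn).ne'
  rw [Fintype.card_fin, hw] at hcount
  push_cast at hcount
  rw [← mul_assoc, hnorm, one_mul, hkraw]
  field_simp
  linear_combination (n.choose w : ℝ) * hcount - hrec
end

section
/- Under the independence assumption on the first round of bit-flipping for an MDPC code of type (v,w) with v = Θ(√n), w = Θ(√n), and t = Θ(√n) initial errors, the number S of errors remaining after one round satisfies, for any t', P(S ≥ t') ≤ (1/√t')·exp( (t'v/4)·ln(1-ε²) + (t'/8)·ln n + O(t'·ln(t'/t)) ), where ε = e^{-2wt/n}. -/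
open Finset
open scoped Classical

private lemma sum_prod_bool' {n : ℕ} (g : Fin n → Bool → ℝ) :
    ∑ x : Fin n → Bool, ∏ i, g i (x i) = ∏ i, (g i true + g i false) := by
  rw [Fintype.prod_sum (f := g) |>.symm] at *
  · congr 1
    ext i
    rw [Fintype.sum_bool]

private lemma marginal' {n : ℕ} (p : Fin n → ℝ) (T : Finset (Fin n)) :
    ∑ x ∈ univ.filter (fun x : Fin n → Bool => ∀ i ∈ T, x i = true),
      ∏ i, (if x i then p i else 1 - p i) = ∏ i ∈ T, p i := by
  classical
  set g : Fin n → Bool → ℝ := fun i b =>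
    if i ∈ T ∧ b = false then 0 else (if b then p i else 1 - p i) with hg
  have key : ∀ x : Fin n → Bool,
      (if (∀ i ∈ T, x i = true) then ∏ i, (if x i then p i else 1 - p i) else 0)
        = ∏ i, g i (x i) := by
    intro x
    by_cases h : ∀ i ∈ T, x i = true
    · rw [if_pos h]
      apply Finset.prod_congr rfl
      intro i _
      simp only [hg]
      by_cases hiT : i ∈ T
      · have := h i hiT
        simp [this]
      · simp [hiT]
    · rw [if_neg h]
      push_neg at h
      obtain ⟨i, hiT, hxi⟩ := h
      have hxi' : x i = false := by simpa using hxi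
      symm
      apply Finset.prod_eq_zero (Finset.mem_univ i)
      simp [hg, hiT, hxi']
  rw [Finset.sum_filter]
  calc ∑ x : Fin n → Bool,
        (if (∀ i ∈ T, x i = true) then ∏ i, (if x i then p i else 1 - p i) else 0)
      = ∑ x : Fin n → Bool, ∏ i, g i (x i) :=
        Finset.sum_congr rfl fun x _ => key x
    _ = ∏ i, (g i true + g i false) := sum_prod_bool' g
    _ = ∏ i, (if i ∈ T then p i else 1) := by
        apply Finset.prod_congr rfl
        intro i _
        by_cases hiT : i ∈ T <;> simp [hg, hiT]
    _ = ∏ i ∈ T, p i := by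
        rw [Finset.prod_ite_mem, Finset.univ_inter]

private lemma union_bound' {n k : ℕ} (μ : (Fin n → Bool) → ℝ) (hμ : ∀ x, 0 ≤ μ x) :
    ∑ x ∈ univ.filter (fun x : Fin n → Bool =>
        k ≤ (univ.filter (fun i => x i = true)).card), μ x
      ≤ ∑ T ∈ Finset.powersetCard k (univ : Finset (Fin n)),
          ∑ x ∈ univ.filter (fun x : Fin n → Bool => ∀ i ∈ T, x i = true), μ x := by
  classical
  have swap : ∑ T ∈ Finset.powersetCard k (univ : Finset (Fin n)),
      ∑ x ∈ univ.filter (fun x : Fin n → Bool => ∀ i ∈ T, x i = true), μ x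
      = ∑ x : Fin n → Bool,
          (((univ.filter (fun i => x i = true)).powersetCard k).card : ℝ) * μ x := by
    simp only [Finset.sum_filter]
    rw [Finset.sum_comm]
    apply Finset.sum_congr rfl
    intro x _
    have hset : (powersetCard k (univ : Finset (Fin n))).filter
        (fun T => ∀ i ∈ T, x i = true)
        = (univ.filter (fun i => x i = true)).powersetCard k := by
      ext T
      simp only [Finset.mem_filter, Finset.mem_powersetCard, Finset.subset_iff,
        Finset.mem_filter, Finset.mem_univ, true_and]
      tauto
    rw [← Finset.sum_filter, hset, Finset.sum_const, nsmul_eq_mul]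
  rw [swap]
  calc ∑ x ∈ univ.filter (fun x : Fin n → Bool =>
        k ≤ (univ.filter (fun i => x i = true)).card), μ x
      ≤ ∑ x ∈ univ.filter (fun x : Fin n → Bool =>
          k ≤ (univ.filter (fun i => x i = true)).card),
          (((univ.filter (fun i => x i = true)).powersetCard k).card : ℝ) * μ x := by
        apply Finset.sum_le_sum
        intro x hx
        rw [Finset.mem_filter] at hx
        have h1 : 1 ≤ ((univ.filter (fun i => x i = true)).powersetCard k).card := by
          rw [Finset.card_powersetCard]
          exact Nat.choose_pos hx.2
        nlinarith [hμ x,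
          (by exact_mod_cast h1 :
            (1:ℝ) ≤ ((univ.filter (fun i => x i = true)).powersetCard k).card)]
    _ ≤ ∑ x : Fin n → Bool,
          (((univ.filter (fun i => x i = true)).powersetCard k).card : ℝ) * μ x := by
        apply Finset.sum_le_sum_of_subset_of_nonneg (Finset.filter_subset _ _)
        intro x _ _
        exact mul_nonneg (Nat.cast_nonneg _) (hμ x)

private lemma binom_tail' {n k : ℕ} (p : Fin n → ℝ) (q : ℝ) (hq : 0 ≤ q)
    (hp0 : ∀ i, 0 ≤ p i) (hp1 : ∀ i, p i ≤ 1) (hpq : ∀ i, p i ≤ q) :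
    ∑ x ∈ univ.filter (fun x : Fin n → Bool =>
        k ≤ (univ.filter (fun i => x i = true)).card),
      ∏ i, (if x i then p i else 1 - p i)
      ≤ (n.choose k : ℝ) * q ^ k := by
  classical
  have hμ : ∀ x : Fin n → Bool, 0 ≤ ∏ i, (if x i then p i else 1 - p i) := by
    intro x
    apply Finset.prod_nonneg
    intro i _
    by_cases h : x i <;> simp [h, hp0 i, sub_nonneg.mpr (hp1 i)]
  calc ∑ x ∈ univ.filter (fun x : Fin n → Bool =>
        k ≤ (univ.filter (fun i => x i = true)).card),
      ∏ i, (if x i then p i else 1 - p i)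
      ≤ ∑ T ∈ Finset.powersetCard k (univ : Finset (Fin n)),
          ∑ x ∈ univ.filter (fun x : Fin n → Bool => ∀ i ∈ T, x i = true),
            ∏ i, (if x i then p i else 1 - p i) := union_bound' _ hμ
    _ = ∑ T ∈ Finset.powersetCard k (univ : Finset (Fin n)), ∏ i ∈ T, p i := by
        exact Finset.sum_congr rfl fun T _ => marginal' p T
    _ ≤ ∑ T ∈ Finset.powersetCard k (univ : Finset (Fin n)), q ^ k := by
        apply Finset.sum_le_sum
        intro T hT
        have hcard : T.card = k := (Finset.mem_powersetCard.mp hT).2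
        calc ∏ i ∈ T, p i ≤ ∏ _i ∈ T, q :=
              Finset.prod_le_prod (fun i _ => hp0 i) (fun i _ => hpq i)
          _ = q ^ k := by rw [Finset.prod_const, hcard]
    _ = (n.choose k : ℝ) * q ^ k := by
        rw [Finset.sum_const, nsmul_eq_mul, Finset.card_powersetCard, Finset.card_univ,
          Fintype.card_fin]

private lemma pow_div_factorial_le_exp' (k : ℕ) :
    (k:ℝ)^k / (Nat.factorial k : ℝ) ≤ Real.exp k := by
  have h := Real.sum_le_exp_of_nonneg (x := (k:ℝ)) (Nat.cast_nonneg k) (k+1)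
  refine le_trans ?_ h
  have := Finset.single_le_sum (f := fun i => (k:ℝ)^i / (Nat.factorial i : ℝ))
    (fun i _ => by positivity) (Finset.self_mem_range_succ k)
  simpa using this

private lemma choose_mul_pow_le_exp' {n k : ℕ} (q : ℝ) (hq : 0 < q) (hn : 1 ≤ n) (hk : 1 ≤ k) :
    (n.choose k : ℝ) * q ^ k ≤ Real.exp (k * (1 + Real.log n + Real.log q - Real.log k)) := by
  have hn0 : (0:ℝ) < n := by exact_mod_cast hn
  have hk0 : (0:ℝ) < k := by exact_mod_cast hk
  have hfac : (0:ℝ) < (Nat.factorial k : ℝ) := by exact_mod_cast Nat.factorial_pos k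
  have h1 : (n.choose k : ℝ) ≤ (n:ℝ)^k / (Nat.factorial k : ℝ) := by
    exact_mod_cast Nat.choose_le_pow_div k n
  have h2 : (1:ℝ) / (Nat.factorial k : ℝ) ≤ Real.exp k / (k:ℝ)^k := by
    rw [div_le_div_iff₀ hfac (by positivity)]
    have := pow_div_factorial_le_exp' k
    rw [div_le_iff₀ hfac] at this
    linarith [this]
  have key : (n.choose k : ℝ) * q ^ k ≤ (n:ℝ)^k * q^k * Real.exp k / (k:ℝ)^k := by
    calc (n.choose k : ℝ) * q ^ k ≤ ((n:ℝ)^k / (Nat.factorial k : ℝ)) * q ^ k := by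
          apply mul_le_mul_of_nonneg_right h1 (by positivity)
      _ = (n:ℝ)^k * q^k * (1 / (Nat.factorial k : ℝ)) := by ring
      _ ≤ (n:ℝ)^k * q^k * (Real.exp k / (k:ℝ)^k) := by
          apply mul_le_mul_of_nonneg_left h2 (by positivity)
      _ = (n:ℝ)^k * q^k * Real.exp k / (k:ℝ)^k := by ring
  refine key.trans (le_of_eq ?_)
  have e1 : (n:ℝ)^k = Real.exp (k * Real.log n) := by
    rw [Real.exp_nat_mul, Real.exp_log hn0]
  have e2 : q^k = Real.exp (k * Real.log q) := by
    rw [Real.exp_nat_mul, Real.exp_log hq]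
  have e3 : (k:ℝ)^k = Real.exp (k * Real.log k) := by
    rw [Real.exp_nat_mul, Real.exp_log hk0]
  rw [e1, e2, e3, ← Real.exp_add, ← Real.exp_add, ← Real.exp_sub]
  congr 1
  ring

set_option maxHeartbeats 1000000 in
/-- Under the independence assumption on the first round of
bit-flipping for an MDPC code of type `(v,w)` with `v, w, t = Θ(√n)`, the number
`S = S₀ + S₁` of remaining errors (`S₀ ~ Bin(n-t, q₀)`, `S₁ ~ Bin(t, q₁)` with
`q_b ≤ A·(1-ε²)^{v/2}/(√v·ε)`, `ε = e^{-2wt/n}`) satisfies for any `t'`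
`P(S ≥ t') ≤ (1/√t')·exp((t'v/4)·ln(1-ε²) + (t'/8)·ln n + O(t'·ln(t'/t)))`.
The `n` positions are indexed so that the first `t` are the initially erroneous
ones (probability `q₁`) and the remaining `n - t` the initially correct ones
(probability `q₀`). -/
theorem two_round_failure_probability
    (c₁ c₂ A : ℝ) (hc₁ : 0 < c₁) (hc : c₁ ≤ c₂) (hA : 0 < A) :
    ∃ B : ℝ, 0 < B ∧ ∃ N : ℕ, ∀ n : ℕ, N ≤ n → ∀ v w t t' : ℕ,
      c₁ * Real.sqrt n ≤ (v : ℝ) → (v : ℝ) ≤ c₂ * Real.sqrt n →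
      c₁ * Real.sqrt n ≤ (w : ℝ) → (w : ℝ) ≤ c₂ * Real.sqrt n →
      c₁ * Real.sqrt n ≤ (t : ℝ) → (t : ℝ) ≤ c₂ * Real.sqrt n →
      t ≤ n → 1 ≤ t' →
      ∀ q₀ q₁ : ℝ, 0 ≤ q₀ → q₀ ≤ 1 → 0 ≤ q₁ → q₁ ≤ 1 →
      q₀ ≤ A * (1 - Real.exp (-(2 * (w : ℝ) * t) / n) ^ 2) ^ ((v : ℝ) / 2)
             / (Real.sqrt v * Real.exp (-(2 * (w : ℝ) * t) / n)) →
      q₁ ≤ A * (1 - Real.exp (-(2 * (w : ℝ) * t) / n) ^ 2) ^ ((v : ℝ) / 2)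
             / (Real.sqrt v * Real.exp (-(2 * (w : ℝ) * t) / n)) →
      ∑ x ∈ Finset.univ.filter (fun x : Fin n → Bool =>
          t' ≤ (Finset.univ.filter (fun i : Fin n => x i = true)).card),
        ∏ i : Fin n,
          (if x i then (if (i : ℕ) < t then q₁ else q₀)
           else 1 - (if (i : ℕ) < t then q₁ else q₀))
      ≤ (1 / Real.sqrt t') *
          Real.exp (((t' : ℝ) * v / 4) * Real.log (1 - Real.exp (-(2 * (w : ℝ) * t) / n) ^ 2)
            + ((t' : ℝ) / 8) * Real.log n
            + B * t' * |Real.log ((t' : ℝ) / t)|) := by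
  classical
  have hc₂ : 0 < c₂ := lt_of_lt_of_le hc₁ hc
  set δ : ℝ := -Real.log (1 - Real.exp (-(4 * c₂ ^ 2))) with hδdef
  have hη0 : 0 < Real.exp (-(4 * c₂ ^ 2)) := Real.exp_pos _
  have hη1 : Real.exp (-(4 * c₂ ^ 2)) < 1 := by
    rw [Real.exp_lt_one_iff]
    have : 0 < c₂ ^ 2 := pow_pos hc₂ 2
    linarith
  have h1η0 : 0 < 1 - Real.exp (-(4 * c₂ ^ 2)) := by linarith
  have h1η1 : 1 - Real.exp (-(4 * c₂ ^ 2)) < 1 := by linarith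
  have hδ : 0 < δ := by
    rw [hδdef, neg_pos]
    exact Real.log_neg h1η0 h1η1
  have hc₁δ : 0 < c₁ * δ := mul_pos hc₁ hδ
  set C₀ : ℝ := 1 + Real.log A + 2 * c₂ ^ 2 with hC₀
  set M : ℝ := max (8 * (max C₀ 0 + 1) / (c₁ * δ)) (max ((32 / (c₁ * δ)) ^ 2) 1) with hM
  have hM1 : (1:ℝ) ≤ M := le_trans (le_max_right _ _) (le_max_right _ _)
  have hM0 : (0:ℝ) ≤ M := by linarith
  clear_value M C₀ δ
  refine ⟨1, one_pos, ⌈M ^ 2⌉₊ + 1, ?_⟩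
  intro n hn v w t t' hv1 hv2 hw1 hw2 ht1 ht2 htn ht'
  intro q₀ q₁ hq₀0 hq₀1 hq₁0 hq₁1 hq₀ hq₁
  -- basic size facts
  have hnM : (M ^ 2 : ℝ) ≤ n := by
    have h1 : (⌈M ^ 2⌉₊ : ℝ) ≤ n := by
      exact_mod_cast Nat.cast_le.mpr (le_trans (Nat.le_succ _) hn)
    exact le_trans (Nat.le_ceil _) h1
  have hn0 : (0:ℝ) < n := by
    have h1 : (1:ℝ)*1 ≤ M*M := mul_le_mul hM1 hM1 zero_le_one hM0
    linarith [hnM, h1]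
  have hn1 : 1 ≤ n := by
    have : 0 < n := by exact_mod_cast hn0
    omega
  set s : ℝ := Real.sqrt n with hs
  have hs0 : 0 < s := Real.sqrt_pos.mpr hn0
  have hsM : M ≤ s := by
    have := Real.sqrt_le_sqrt hnM
    rwa [Real.sqrt_sq hM0] at this
  have hs1 : 1 ≤ s := le_trans hM1 hsM
  have hsq : s ^ 2 = n := Real.sq_sqrt hn0.le
  clear_value s
  -- positivity of v, w, t
  have hv0 : (0:ℝ) < v := lt_of_lt_of_le (mul_pos hc₁ hs0) hv1
  have hw0 : (0:ℝ) < w := lt_of_lt_of_le (mul_pos hc₁ hs0) hw1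
  have ht0 : (0:ℝ) < t := lt_of_lt_of_le (mul_pos hc₁ hs0) ht1
  have hvnat : 0 < v := by exact_mod_cast hv0
  have hwnat : 0 < w := by exact_mod_cast hw0
  have htnat : 0 < t := by exact_mod_cast ht0
  have hvR : (1:ℝ) ≤ v := by exact_mod_cast hvnat
  have hwR : (1:ℝ) ≤ w := by exact_mod_cast hwnat
  have htR : (1:ℝ) ≤ t := by exact_mod_cast htnat
  have hkR : (1:ℝ) ≤ (t' : ℝ) := by exact_mod_cast ht'
  have hk0 : (0:ℝ) < t' := by linarith
  -- epsilon facts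
  set ε : ℝ := Real.exp (-(2 * (w : ℝ) * t) / n) with hεdef
  have hε0 : 0 < ε := Real.exp_pos _
  have hargneg : -(2 * (w : ℝ) * t) / n < 0 := by
    apply div_neg_of_neg_of_pos _ hn0
    have h1 : (0:ℝ) < 2 * (w:ℝ) * t := by positivity
    linarith
  have hε1 : ε < 1 := by
    rw [hεdef, Real.exp_lt_one_iff]; exact hargneg
  have hε2lt1 : ε ^ 2 < 1 := pow_lt_one₀ hε0.le hε1 (by norm_num)
  have h1ε2 : 0 < 1 - ε ^ 2 := by linarith
  clear_value ε
  have hwtn : (w:ℝ) * t ≤ c₂ ^ 2 * n := by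
    have h1 : (w:ℝ) * t ≤ (c₂ * s) * (c₂ * s) :=
      mul_le_mul hw2 ht2 ht0.le (mul_nonneg hc₂.le hs0.le)
    have h2 : c₂ ^ 2 * s ^ 2 = c₂ ^ 2 * (n:ℝ) := by rw [hsq]
    linarith [h1, h2]
  have h4wtn : (4 * (w:ℝ) * t) / n ≤ 4 * c₂ ^ 2 := by
    rw [div_le_iff₀ hn0]; linarith [hwtn]
  have hεlb : Real.exp (-(4 * c₂ ^ 2)) ≤ ε ^ 2 := by
    have heq : ε ^ 2 = Real.exp (-(2 * (w : ℝ) * t) / n + -(2 * (w : ℝ) * t) / n) := by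
      rw [Real.exp_add, hεdef]; ring
    rw [heq]
    apply Real.exp_le_exp.mpr
    have : -(2 * (w : ℝ) * t) / n + -(2 * (w : ℝ) * t) / n = -((4 * (w:ℝ) * t) / n) := by
      ring
    rw [this]
    linarith
  set L : ℝ := Real.log (1 - ε ^ 2) with hLdef
  clear_value L
  have hL : L ≤ -δ := by
    have h1 : 1 - ε ^ 2 ≤ 1 - Real.exp (-(4 * c₂ ^ 2)) := by linarith
    have := Real.log_le_log h1ε2 h1
    rw [hLdef, hδdef]
    linarith
  -- q* facts
  set qs : ℝ := A * (1 - ε ^ 2) ^ ((v : ℝ) / 2) / (Real.sqrt v * ε) with hqs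
  clear_value qs
  have hrp : 0 < (1 - ε ^ 2) ^ ((v : ℝ) / 2) := Real.rpow_pos_of_pos h1ε2 _
  have hsv : 0 < Real.sqrt v := Real.sqrt_pos.mpr hv0
  have hqs0 : 0 < qs := by
    rw [hqs]; positivity
  have hlogqs : Real.log qs = Real.log A + ((v:ℝ) / 2) * L
      - (Real.log v / 2 + -(2 * (w : ℝ) * t) / n) := by
    rw [hqs, Real.log_div (by positivity) (by positivity), Real.log_mul hA.ne' hrp.ne',
      Real.log_mul hsv.ne' hε0.ne', Real.log_rpow h1ε2, Real.log_sqrt hv0.le,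
      hεdef, Real.log_exp, hLdef]
    rw [← hεdef]
  have hlogv0 : 0 ≤ Real.log v := Real.log_nonneg hvR
  have hlogqs_le : Real.log qs ≤ Real.log A + ((v:ℝ) / 2) * L + 2 * c₂ ^ 2 := by
    have h2 : -(-(2 * (w : ℝ) * t) / n) ≤ 2 * c₂ ^ 2 := by
      have : (2 * (w:ℝ) * t) / n ≤ 2 * c₂ ^ 2 := by
        rw [div_le_iff₀ hn0]; linarith [hwtn]
      linarith [this, (by ring : -(-(2 * (w : ℝ) * t) / n) = (2 * (w:ℝ) * t) / n)]
    rw [hlogqs]; linarith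
  -- log n bound
  have hlogn0 : 0 ≤ Real.log n := Real.log_nonneg (by exact_mod_cast hn1)
  have hss0 : 0 < Real.sqrt s := Real.sqrt_pos.mpr hs0
  have hlogn_le : Real.log n ≤ 4 * Real.sqrt s := by
    have e1 : Real.log s = Real.log n / 2 := by rw [hs]; exact Real.log_sqrt hn0.le
    have e2 : Real.log (Real.sqrt s) = Real.log s / 2 := Real.log_sqrt hs0.le
    have e3 : Real.log (Real.sqrt s) ≤ Real.sqrt s - 1 := Real.log_le_sub_one_of_pos hss0
    linarith
  -- threshold bounds from M ≤ s
  have hb1 : C₀ + 1 ≤ c₁ * δ / 8 * s := by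
    have h1 : 8 * (max C₀ 0 + 1) / (c₁ * δ) ≤ s :=
      le_trans (by rw [hM]; exact le_max_left _ _) hsM
    have h2 : 8 * (max C₀ 0 + 1) ≤ c₁ * δ * s := by
      rw [div_le_iff₀ hc₁δ] at h1; linarith
    have h3 : C₀ ≤ max C₀ 0 := le_max_left _ _
    linarith
  have hb2 : 4 * Real.sqrt s ≤ c₁ * δ / 8 * s := by
    have h1 : (32 / (c₁ * δ)) ^ 2 ≤ s :=
      le_trans (by rw [hM]; exact le_trans (le_max_left _ _) (le_max_right _ _)) hsM
    have h2 : 32 / (c₁ * δ) ≤ Real.sqrt s := by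
      have := Real.sqrt_le_sqrt h1
      rwa [Real.sqrt_sq (by positivity)] at this
    have h3 : 32 ≤ c₁ * δ * Real.sqrt s := by
      rw [div_le_iff₀ hc₁δ] at h2; linarith
    have h4 : Real.sqrt s ^ 2 = s := Real.sq_sqrt hs0.le
    have h5 : (0:ℝ) ≤ (c₁ * δ * Real.sqrt s - 32) * Real.sqrt s :=
      mul_nonneg (by linarith [h3]) hss0.le
    have h6 : c₁ * δ / 8 * Real.sqrt s ^ 2 = c₁ * δ / 8 * s := by rw [h4]
    linarith [h5, h6]
  have hb : C₀ + Real.log n ≤ c₁ * δ / 4 * s := by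
    have := le_trans hlogn_le hb2
    linarith
  -- main chain
  have step1 : ∑ x ∈ Finset.univ.filter (fun x : Fin n → Bool =>
          t' ≤ (Finset.univ.filter (fun i : Fin n => x i = true)).card),
        ∏ i : Fin n,
          (if x i then (if (i : ℕ) < t then q₁ else q₀)
           else 1 - (if (i : ℕ) < t then q₁ else q₀))
      ≤ (n.choose t' : ℝ) * qs ^ t' := by
    apply binom_tail' (fun i : Fin n => if (i : ℕ) < t then q₁ else q₀) qs hqs0.le
    · intro i; by_cases h : (i : ℕ) < t <;> simp [h, hq₀0, hq₁0]
    · intro i; by_cases h : (i : ℕ) < t <;> simp [h, hq₀1, hq₁1]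
    · intro i
      by_cases h : (i : ℕ) < t <;> simp only [h, if_true, if_false, ← hqs]
      · exact hq₁
      · exact hq₀
  have step2 : (n.choose t' : ℝ) * qs ^ t'
      ≤ Real.exp (t' * (1 + Real.log n + Real.log qs - Real.log t')) :=
    choose_mul_pow_le_exp' qs hqs0 hn1 ht'
  -- exponent comparison
  have hexp : (t' : ℝ) * (1 + Real.log n + Real.log qs - Real.log t')
      ≤ ((t' : ℝ) * v / 4) * L + ((t' : ℝ) / 8) * Real.log n
        + 1 * t' * |Real.log ((t' : ℝ) / t)| - Real.log t' / 2 := by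
    have m1 : (t' : ℝ) * Real.log qs
        ≤ (t' : ℝ) * (Real.log A + ((v:ℝ) / 2) * L + 2 * c₂ ^ 2) :=
      mul_le_mul_of_nonneg_left hlogqs_le (by linarith)
    have m2 : ((t' : ℝ) * v / 4) * L ≤ -((t' : ℝ) * (c₁ * s) * δ / 4) := by
      have h1 : ((t' : ℝ) * v / 4) * L ≤ ((t' : ℝ) * v / 4) * (-δ) :=
        mul_le_mul_of_nonneg_left hL (by positivity)
      have h2 : ((t' : ℝ) * v / 4) * (-δ) ≤ ((t' : ℝ) * (c₁ * s) / 4) * (-δ) := by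
        apply mul_le_mul_of_nonpos_right _ (by linarith)
        have h3 := mul_le_mul_of_nonneg_left hv1 (by positivity : (0:ℝ) ≤ (t':ℝ)/4)
        linarith
      calc ((t' : ℝ) * v / 4) * L ≤ ((t' : ℝ) * (c₁ * s) / 4) * (-δ) := le_trans h1 h2
        _ = -((t' : ℝ) * (c₁ * s) * δ / 4) := by ring
    have m3 : (t' : ℝ) * (C₀ + Real.log n) ≤ (t' : ℝ) * (c₁ * δ / 4 * s) :=
      mul_le_mul_of_nonneg_left hb (by linarith)
    have m4 : Real.log (t' : ℝ) * (1/2 - (t' : ℝ)) ≤ 0 :=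
      mul_nonpos_of_nonneg_of_nonpos (Real.log_nonneg hkR) (by linarith)
    have m5 : (0:ℝ) ≤ ((t' : ℝ) / 8) * Real.log n := by positivity
    have m6 : (0:ℝ) ≤ 1 * (t' : ℝ) * |Real.log ((t' : ℝ) / t)| := by positivity
    rw [hC₀] at m3
    have mexp : (t' : ℝ) * (Real.log A + ((v:ℝ) / 2) * L + 2 * c₂ ^ 2)
        = (t':ℝ) * Real.log A + ((t':ℝ) * (v:ℝ) / 4) * L + ((t':ℝ) * (v:ℝ) / 4) * L
          + (t':ℝ) * (2 * c₂ ^ 2) := by ring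
    rw [mexp] at m1
    linarith [m1, m2, m3, m4, m5, m6]
  -- assemble
  have hineq := le_trans step1 (le_trans step2 (Real.exp_le_exp.mpr hexp))
  have hst' : 0 < Real.sqrt t' := Real.sqrt_pos.mpr hk0
  have hrhs : (1 / Real.sqrt t') *
      Real.exp (((t' : ℝ) * v / 4) * L + ((t' : ℝ) / 8) * Real.log n
        + 1 * t' * |Real.log ((t' : ℝ) / t)|)
      = Real.exp (((t' : ℝ) * v / 4) * L + ((t' : ℝ) / 8) * Real.log n
        + 1 * t' * |Real.log ((t' : ℝ) / t)| - Real.log t' / 2) := by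
    rw [Real.exp_sub]
    have : Real.exp (Real.log (t':ℝ) / 2) = Real.sqrt t' := by
      rw [← Real.log_sqrt (Nat.cast_nonneg t'), Real.exp_log hst']
    rw [this]
    ring
  rw [hrhs]
  exact hineq
end

section
/- If a type-(v,w) parity-check matrix of a code of length n with v ≥ α√n has maximum column intersection at most (2+ε)(ln n)/(ln ln n), then the code corrects all error patterns of weight at most ⌊α√n·(ln ln n)/((4+2ε)·ln n)⌋ by majority-logic decoding. -/
open Finset

open Classical in
private lemma mdpc_count_le {r n : ℕ} (H : Matrix (Fin r) (Fin n) (ZMod 2)) (i : Fin n)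
    (S' : Finset (Fin n)) :
    (Finset.univ.filter (fun j : Fin r => H j i = 1 ∧ ∃ k ∈ S', H j k = 1)).card
      ≤ ∑ k ∈ S', (Finset.univ.filter (fun j : Fin r => H j i = 1 ∧ H j k = 1)).card := by
  refine le_trans (Finset.card_le_card ?_) Finset.card_biUnion_le
  intro j hj
  simp only [Finset.mem_filter, Finset.mem_univ, true_and] at hj
  obtain ⟨h1, k, hk, h2⟩ := hj
  exact Finset.mem_biUnion.mpr ⟨k, hk, by simp [h1, h2]⟩

/-- formalizable core: if a type-`(v,w)` parity-check matrix (all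
rows of weight `w`, all columns of weight `v`) with `v ≥ α√n` has maximum column
intersection at most `(2+ε)·(ln n)/(ln ln n)`, then one round of majority-logic
decoding corrects all error patterns of weight at most
`⌊α·√n·(ln ln n)/((4+2ε)·ln n)⌋`. -/
theorem mdpc_corrects_sqrt_loglog_over_log
    (α ε : ℝ) (hα : 0 < α) (hε : 0 < ε)
    (r n v w : ℕ) (hn : 3 ≤ n)
    (H : Matrix (Fin r) (Fin n) (ZMod 2))
    (hrow : ∀ j : Fin r, (Finset.univ.filter (fun i : Fin n => H j i = 1)).card = w)
    (hcolw : ∀ i : Fin n, (Finset.univ.filter (fun j : Fin r => H j i = 1)).card = v)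
    (hv : α * Real.sqrt n ≤ (v : ℝ))
    (hint : ∀ i i' : Fin n, i ≠ i' →
      ((Finset.univ.filter (fun j : Fin r => H j i = 1 ∧ H j i' = 1)).card : ℝ)
        ≤ (2 + ε) * Real.log n / Real.log (Real.log n))
    (c e : Fin n → ZMod 2)
    (hc : Matrix.mulVec H c = 0)
    (hwt : (Finset.univ.filter (fun i : Fin n => e i ≠ 0)).card
      ≤ ⌊α * Real.sqrt n * Real.log (Real.log n) / ((4 + 2 * ε) * Real.log n)⌋₊) :
    ∀ i : Fin n,
      (if (Finset.univ.filter (fun j : Fin r => H j i = 1)).card <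
          2 * (Finset.univ.filter (fun j : Fin r =>
                H j i = 1 ∧ Matrix.mulVec H (c + e) j = 1)).card
       then (c + e) i + 1 else (c + e) i) = c i := by
  intro i
  classical
  have hZ : ∀ x : ZMod 2, x ≠ 0 → x = 1 := by decide
  set S : Finset (Fin n) := Finset.univ.filter (fun k => e k ≠ 0) with hSdef
  -- syndrome
  have hsyn : ∀ j : Fin r, Matrix.mulVec H (c + e) j = ∑ k ∈ S, H j k := by
    intro j
    have h0 : Matrix.mulVec H c j = 0 := by rw [hc]; rfl
    have h1 : Matrix.mulVec H (c + e) j = Matrix.mulVec H c j + Matrix.mulVec H e j := by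
      rw [Matrix.mulVec_add]; rfl
    rw [h1, h0, zero_add]
    have h2 : Matrix.mulVec H e j = ∑ k, H j k * e k := rfl
    rw [h2, ← Finset.sum_filter_of_ne (s := Finset.univ)
      (p := fun k => e k ≠ 0) (f := fun k => H j k * e k)
      (by intro k _ hk h0; exact hk (by simp [h0]))]
    refine Finset.sum_congr rfl ?_
    intro k hk
    simp only [hSdef, Finset.mem_filter] at hk
    rw [hZ _ hk.2, mul_one]
  -- numeric facts
  have hn3 : (3:ℝ) ≤ (n:ℝ) := by exact_mod_cast hn
  have hlog3 : (1:ℝ) < Real.log 3 := by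
    rw [Real.lt_log_iff_exp_lt (by norm_num)]
    exact lt_of_lt_of_le Real.exp_one_lt_d9 (by norm_num)
  have hL : 1 < Real.log n := lt_of_lt_of_le hlog3 (Real.log_le_log (by norm_num) hn3)
  have hL0 : 0 < Real.log n := by linarith
  have hLL : 0 < Real.log (Real.log n) := Real.log_pos hL
  have hsqrt : 0 < Real.sqrt n := Real.sqrt_pos.mpr (by linarith)
  set s : ℝ := (2 + ε) * Real.log n / Real.log (Real.log n) with hsdef
  set T : ℝ := α * Real.sqrt n * Real.log (Real.log n) / ((4 + 2 * ε) * Real.log n) with hTdef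
  have hs0 : 0 < s := by
    apply div_pos (by positivity) hLL
  have hT0 : 0 < T := by
    apply div_pos (by positivity) (by positivity)
  have hTs : 2 * T * s = α * Real.sqrt n := by
    rw [hTdef, hsdef]; field_simp; ring
  have htT : ((S.card : ℕ) : ℝ) ≤ T := by
    calc ((S.card : ℕ) : ℝ) ≤ (⌊T⌋₊ : ℝ) := by exact_mod_cast hwt
    _ ≤ T := Nat.floor_le hT0.le
  -- intersection sum bound
  have hsum : ∀ S' : Finset (Fin n), i ∉ S' →
      ((Finset.univ.filter (fun j : Fin r => H j i = 1 ∧ ∃ k ∈ S', H j k = 1)).card : ℝ)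
        ≤ (S'.card : ℝ) * s := by
    intro S' hiS'
    calc ((Finset.univ.filter (fun j : Fin r => H j i = 1 ∧ ∃ k ∈ S', H j k = 1)).card : ℝ)
        ≤ ((∑ k ∈ S', (Finset.univ.filter
              (fun j : Fin r => H j i = 1 ∧ H j k = 1)).card : ℕ) : ℝ) := by
          exact_mod_cast mdpc_count_le H i S'
      _ = ∑ k ∈ S', ((Finset.univ.filter
              (fun j : Fin r => H j i = 1 ∧ H j k = 1)).card : ℝ) := by push_cast; rfl
      _ ≤ ∑ _k ∈ S', s := by
          refine Finset.sum_le_sum ?_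
          intro k hk
          exact hint i k (fun h => hiS' (h ▸ hk))
      _ = (S'.card : ℝ) * s := by rw [Finset.sum_const, nsmul_eq_mul]
  rw [hcolw i]
  by_cases hei : e i = 0
  · -- no flip
    have hiS : i ∉ S := by simp [hSdef, hei]
    have hsub : (Finset.univ.filter (fun j : Fin r =>
          H j i = 1 ∧ Matrix.mulVec H (c + e) j = 1))
        ⊆ (Finset.univ.filter (fun j : Fin r => H j i = 1 ∧ ∃ k ∈ S, H j k = 1)) := by
      intro j hj
      simp only [Finset.mem_filter, Finset.mem_univ, true_and] at hj ⊢
      refine ⟨hj.1, ?_⟩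
      have h1 : (∑ k ∈ S, H j k) ≠ 0 := by rw [← hsyn j, hj.2]; exact one_ne_zero
      obtain ⟨k, hk, hk2⟩ := Finset.exists_ne_zero_of_sum_ne_zero h1
      exact ⟨k, hk, hZ _ hk2⟩
    have hNr : ((Finset.univ.filter (fun j : Fin r =>
          H j i = 1 ∧ Matrix.mulVec H (c + e) j = 1)).card : ℝ)
        ≤ (S.card : ℝ) * s :=
      le_trans (by exact_mod_cast Finset.card_le_card hsub) (hsum S hiS)
    have h2N : (2 * (Finset.univ.filter (fun j : Fin r =>
          H j i = 1 ∧ Matrix.mulVec H (c + e) j = 1)).card : ℝ) ≤ (v : ℝ) := by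
      have : (S.card : ℝ) * s ≤ T * s := mul_le_mul_of_nonneg_right htT hs0.le
      push_cast
      nlinarith [hTs, hv]
    rw [if_neg (by push_cast at h2N; exact not_lt.mpr (by exact_mod_cast h2N))]
    show c i + e i = c i
    rw [hei, add_zero]
  · -- flip
    have hei1 : e i = 1 := hZ _ hei
    have hiS : i ∈ S := by simp [hSdef, hei]
    have hScard : 1 ≤ S.card := Finset.card_pos.mpr ⟨i, hiS⟩
    set N : Finset (Fin r) := Finset.univ.filter (fun j : Fin r =>
        H j i = 1 ∧ Matrix.mulVec H (c + e) j = 1) with hNdef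
    set B : Finset (Fin r) := Finset.univ.filter (fun j : Fin r =>
        H j i = 1 ∧ ¬ Matrix.mulVec H (c + e) j = 1) with hBdef
    have hNB : N.card + B.card = v := by
      rw [← hcolw i, hNdef, hBdef]
      rw [Finset.filter_and, Finset.filter_and, ← Finset.card_union_of_disjoint]
      · congr 1
        ext j
        simp only [Finset.mem_union, Finset.mem_inter, Finset.mem_filter, Finset.mem_univ,
          true_and]
        tauto
      · rw [Finset.disjoint_left]
        intro j hj1 hj2
        simp only [Finset.mem_inter, Finset.mem_filter, Finset.mem_univ, true_and] at hj1 hj2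
        exact hj2.2 hj1.2
    have hBsub : B ⊆ Finset.univ.filter (fun j : Fin r =>
        H j i = 1 ∧ ∃ k ∈ S.erase i, H j k = 1) := by
      intro j hj
      simp only [hBdef, Finset.mem_filter, Finset.mem_univ, true_and] at hj ⊢
      refine ⟨hj.1, ?_⟩
      have h1 : (∑ k ∈ S, H j k) = H j i + ∑ k ∈ S.erase i, H j k :=
        (Finset.add_sum_erase S (fun k => H j k) hiS).symm
      have h2 : (∑ k ∈ S.erase i, H j k) ≠ 0 := by
        intro h0
        apply hj.2
        rw [hsyn j, h1, h0, add_zero, hj.1]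
      obtain ⟨k, hk, hk2⟩ := Finset.exists_ne_zero_of_sum_ne_zero h2
      exact ⟨k, hk, hZ _ hk2⟩
    have hBr : (B.card : ℝ) ≤ ((S.card : ℝ) - 1) * s := by
      have := hsum (S.erase i) (Finset.notMem_erase i S)
      have hcarde : ((S.erase i).card : ℝ) = (S.card : ℝ) - 1 := by
        rw [Finset.card_erase_of_mem hiS, Nat.cast_sub hScard]
        simp
      calc (B.card : ℝ) ≤ _ := by exact_mod_cast Finset.card_le_card hBsub
        _ ≤ ((S.erase i).card : ℝ) * s := this
        _ = ((S.card : ℝ) - 1) * s := by rw [hcarde]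
    have hkey : (v : ℝ) < 2 * (N.card : ℝ) := by
      have h1 : (S.card : ℝ) * s ≤ T * s := mul_le_mul_of_nonneg_right htT hs0.le
      have h2 : (N.card : ℝ) + (B.card : ℝ) = (v : ℝ) := by exact_mod_cast hNB
      nlinarith [hTs, hv, hBr, hs0]
    rw [if_pos (by exact_mod_cast hkey)]
    show c i + e i + 1 = c i
    rw [hei1]
    have : (1 : ZMod 2) + 1 = 0 := by decide
    rw [add_assoc, this, add_zero]
end
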